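/- Let K = (k_1, k_2, ...) be a finite sequence of non-negative integers, not all zero, and set n = Σ_m m·k_m. The number of semicharts (n, v, S) such that v has exactly k_m orbits of cardinality m for every m ≥ 1 equals n! · ∏_{m≥1} (1/k_m!) · (2^{m-1}/m)^{k_m}. -/

import Mathlib

/-!
For a fixed permutation `σ`, a set `S` meeting every `σ`-orbit `O` in an odd number of points is
chosen independently on each orbit, in `2 ^ (|O| - 1)` ways, since half of the subsets of a
nonempty set have odd size. So each `σ` with `k m` orbits of size `m` carries
`∏ m, (2 ^ (m - 1)) ^ k m` such sets. These permutations form a single conjugacy class, and the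
orbit-stabilizer theorem (`Equiv.Perm.card_isConj_mul_eq`) gives its size times the order
`∏ m, (k m)! * m ^ k m` of the centralizer as `n!`.
-/

open Finset
open scoped Nat

theorem ncard_setOf_prod_eq_mul {β γ : Type*} [Fintype β] [Finite γ] (P : β → Prop)
    (R : β → γ → Prop) {c : ℕ} (h : ∀ b, P b → {g | R b g}.ncard = c) :
    {p : β × γ | R p.1 p.2 ∧ P p.1}.ncard = {b | P b}.ncard * c := by
  classical
  rw [← Nat.card_coe_set_eq, Set.coe_ofPred,
    Nat.card_congr (Equiv.subtypeProdEquivSigmaSubtype fun b g => R b g ∧ P b), Nat.card_sigma,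
    Set.ncard_eq_toFinset_card', Set.toFinset_ofPred, card_filter, sum_mul]
  refine sum_congr rfl fun b _ => ?_
  split_ifs with hb
  · rw [← h b hb, ← Nat.card_coe_set_eq, one_mul]
    exact Nat.card_congr (Equiv.subtypeEquivRight fun g => and_iff_left hb)
  · simp [hb]

section OddFibres

variable {α ι : Type*}

theorem card_powerset_filter_odd {s : Finset α} (hs : s.Nonempty) :
    #{t ∈ s.powerset | Odd #t} = 2 ^ (#s - 1) := by
  have hsplit := card_filter_add_card_filter_not (s := s.powerset) (fun t => Odd #t)
  have hbalance : (#{t ∈ s.powerset | Odd #t} : ℤ) = #{t ∈ s.powerset | ¬Odd #t} := by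
    have h := sum_powerset_neg_one_pow_card_of_nonempty hs
    rw [← sum_filter_add_sum_filter_not _ (fun t => Odd #t),
      sum_congr rfl fun t ht => (mem_filter.1 ht).2.neg_one_pow,
      sum_congr rfl fun t ht => (Nat.not_odd_iff_even.1 (mem_filter.1 ht).2).neg_one_pow] at h
    simp only [sum_const, nsmul_eq_mul, mul_neg, mul_one] at h
    linarith
  have hpow : 2 ^ #s = 2 * 2 ^ (#s - 1) := by
    rw [← pow_succ', Nat.sub_add_cancel hs.card_pos]
  rw [card_powerset] at hsplit
  omega

theorem card_filter_forall_odd_card_fiber [Fintype α] [DecidableEq α] [DecidableEq ι]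
    (f : α → ι) :
    #{S : Finset α | ∀ a, Odd #{x ∈ S | f x = f a}} =
      ∏ i ∈ univ.image f, 2 ^ (#{x | f x = i} - 1) := by
  let t : ι → Finset (Finset α) := fun i => {T ∈ (univ.filter (f · = i)).powerset | Odd #T}
  let glue : (∀ i ∈ univ.image f, Finset α) → Finset α :=
    fun p => {x | x ∈ p (f x) (mem_image_of_mem f (mem_univ x))}
  have hglue : ∀ p ∈ (univ.image f).pi t, ∀ i (hi : i ∈ univ.image f),
      {x ∈ glue p | f x = i} = p i hi := by
    intro p hp i hi
    have hsub : p i hi ⊆ univ.filter (f · = i) :=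
      mem_powerset.1 (mem_filter.1 (mem_pi.1 hp i hi)).1
    ext x
    simp only [glue, mem_filter, mem_univ, true_and]
    constructor
    · rintro ⟨hx, rfl⟩
      exact hx
    · intro hx
      obtain rfl : f x = i := (mem_filter.1 (hsub hx)).2
      exact ⟨hx, rfl⟩
  calc _ = #((univ.image f).pi t) := by
        refine card_nbij' (fun S i _ => {x ∈ S | f x = i}) glue ?_ ?_ ?_ ?_
        · intro S hS
          simp only [coe_filter, mem_univ, true_and, Set.mem_ofPred_eq] at hS
          simp only [mem_coe, mem_pi, t, mem_filter, mem_powerset]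
          rintro i hi
          obtain ⟨a, -, rfl⟩ := mem_image.1 hi
          exact ⟨fun x hx => by simp_all, hS a⟩
        · intro p hp
          simp only [coe_filter, mem_univ, true_and, Set.mem_ofPred_eq]
          intro a
          rw [hglue p hp (f a) (mem_image_of_mem f (mem_univ a))]
          exact (mem_filter.1 (mem_pi.1 hp _ _)).2
        · intro S _
          ext x
          simp [glue]
        · intro p hp
          funext i hi
          exact hglue p hp i hi
    _ = _ := by
        rw [card_pi]
        refine prod_congr rfl fun i hi => card_powerset_filter_odd ?_
        obtain ⟨a, -, rfl⟩ := mem_image.1 hi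
        exact ⟨a, by simp⟩

end OddFibres

namespace Equiv.Perm

variable {α : Type*}

theorem exists_pow_apply_eq_iff_sameCycle [Finite α] (σ : Perm α) {a x : α} :
    (∃ s : ℕ, (σ ^ s) a = x) ↔ σ.SameCycle a x :=
  ⟨fun ⟨s, hs⟩ => ⟨s, by simpa using hs⟩, SameCycle.exists_nat_pow_eq⟩

theorem setOf_sameCycle_eq_iff (σ : Perm α) {a b : α} :
    {x | σ.SameCycle b x} = {x | σ.SameCycle a x} ↔ σ.SameCycle a b := by
  refine ⟨fun h => ?_, fun h => Set.ext fun x => ⟨h.trans, h.symm.trans⟩⟩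
  have hb : b ∈ {x | σ.SameCycle b x} := SameCycle.refl σ b
  rwa [h] at hb

theorem setOf_sameCycle_of_apply_eq (σ : Perm α) {a : α} (ha : σ a = a) :
    {x | σ.SameCycle a x} = {a} :=
  Set.ext fun _ => ⟨fun h => (h.eq_of_left ha).symm, fun h => h ▸ SameCycle.refl σ a⟩

variable [Fintype α]

open Classical in
noncomputable def orbits (σ : Perm α) : Finset (Set α) :=
  univ.image fun a => {x | σ.SameCycle a x}

noncomputable def orbitCount (σ : Perm α) (m : ℕ) : ℕ :=
  #{O ∈ σ.orbits | O.ncard = m}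

theorem mem_orbits {σ : Perm α} {O : Set α} :
    O ∈ σ.orbits ↔ ∃ a, {x | σ.SameCycle a x} = O := by
  simp [orbits]

theorem orbitCount_eq_ncard (σ : Perm α) (m : ℕ) :
    σ.orbitCount m = {O : Set α | (∃ a, O = {x | σ.SameCycle a x}) ∧ O.ncard = m}.ncard := by
  rw [orbitCount, ← Set.ncard_coe_finset]
  congr 1
  ext O
  simp [mem_orbits, eq_comm]

theorem orbitCount_zero (σ : Perm α) : σ.orbitCount 0 = 0 := by
  rw [orbitCount, Finset.card_eq_zero, filter_eq_empty_iff]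
  intro O hO
  obtain ⟨a, rfl⟩ := mem_orbits.1 hO
  exact (Set.ncard_pos (Set.toFinite _)).2 ⟨a, SameCycle.refl σ a⟩ |>.ne'

variable [DecidableEq α]

theorem setOf_sameCycle_of_mem_support (σ : Perm α) {a : α} (ha : a ∈ σ.support) :
    {x | σ.SameCycle a x} = (σ.cycleOf a).support := by
  ext x
  rw [Set.mem_ofPred_eq, mem_coe, mem_support_cycleOf_iff]
  exact (and_iff_left ha).symm

theorem ncard_setOf_sameCycle_eq_one_iff (σ : Perm α) {a : α} :
    {x | σ.SameCycle a x}.ncard = 1 ↔ σ a = a := by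
  refine ⟨fun h => ?_, fun h => by rw [setOf_sameCycle_of_apply_eq σ h, Set.ncard_singleton]⟩
  by_contra ha
  rw [setOf_sameCycle_of_mem_support σ (mem_support.2 ha), Set.ncard_coe_finset] at h
  have := two_le_card_support_cycleOf_iff.2 ha
  omega

theorem orbitCount_one (σ : Perm α) : σ.orbitCount 1 = Fintype.card α - σ.cycleType.sum := by
  rw [← card_fixedPoints, Fintype.card_subtype, orbitCount]
  refine (card_nbij (fun a => {a}) ?_ ?_ ?_).symm
  · intro a ha
    replace ha : σ a = a := (mem_filter.1 ha).2
    simp only [coe_filter, Set.mem_ofPred_eq, mem_orbits]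
    exact ⟨⟨a, setOf_sameCycle_of_apply_eq σ ha⟩, Set.ncard_singleton a⟩
  · intro a _ b _ h
    exact Set.singleton_injective h
  · intro O hO
    simp only [coe_filter, Set.mem_ofPred_eq, mem_orbits] at hO
    obtain ⟨⟨a, rfl⟩, h⟩ := hO
    have ha := (ncard_setOf_sameCycle_eq_one_iff σ).1 h
    exact ⟨a, mem_filter.2 ⟨mem_univ a, ha⟩, (setOf_sameCycle_of_apply_eq σ ha).symm⟩

theorem orbitCount_eq_count_cycleType (σ : Perm α) {m : ℕ} (hm : 2 ≤ m) :
    σ.orbitCount m = σ.cycleType.count m := by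
  have hcount : σ.cycleType.count m = #{c ∈ σ.cycleFactorsFinset | #c.support = m} := by
    rw [cycleType_def, Multiset.count_map, card_def, filter_val]
    simp only [Function.comp_apply, eq_comm]
  rw [hcount, orbitCount]
  refine (card_nbij (fun c => (c.support : Set α)) ?_ ?_ ?_).symm
  · intro c hcm
    obtain ⟨hc, rfl⟩ := mem_filter.1 (mem_coe.1 hcm)
    obtain ⟨a, ha⟩ := (mem_cycleFactorsFinset_iff.1 hc).1.nonempty_support
    refine mem_filter.2 ⟨mem_orbits.2 ⟨a, ?_⟩, Set.ncard_coe_finset _⟩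
    rw [setOf_sameCycle_of_mem_support σ (mem_cycleFactorsFinset_support_le hc ha),
      ← cycle_is_cycleOf ha hc]
  · intro c hc c' hc' h
    obtain ⟨a, ha⟩ := (mem_cycleFactorsFinset_iff.1 (mem_filter.1 hc).1).1.nonempty_support
    have ha' : a ∈ c'.support := coe_inj.1 h ▸ ha
    rw [cycle_is_cycleOf ha (mem_filter.1 hc).1, cycle_is_cycleOf ha' (mem_filter.1 hc').1]
  · intro O hOm
    obtain ⟨hO, rfl⟩ := mem_filter.1 (mem_coe.1 hOm)
    obtain ⟨a, rfl⟩ := mem_orbits.1 hO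
    have ha : a ∈ σ.support := by
      rw [mem_support, Ne, ← ncard_setOf_sameCycle_eq_one_iff]
      omega
    refine ⟨σ.cycleOf a, mem_filter.2 ⟨cycleOf_mem_cycleFactorsFinset_iff.2 ha, ?_⟩, ?_⟩
    · rw [setOf_sameCycle_of_mem_support σ ha, Set.ncard_coe_finset]
    · rw [setOf_sameCycle_of_mem_support σ ha]

theorem isConj_iff_forall_orbitCount_eq {σ τ : Perm α} :
    IsConj σ τ ↔ ∀ m, 1 ≤ m → σ.orbitCount m = τ.orbitCount m := by
  rw [isConj_iff_cycleType_eq]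
  refine ⟨fun h m hm => ?_, fun h => Multiset.ext.2 fun m => ?_⟩
  · obtain rfl | hm := eq_or_lt_of_le hm
    · rw [orbitCount_one, orbitCount_one, h]
    · rw [orbitCount_eq_count_cycleType σ hm, orbitCount_eq_count_cycleType τ hm, h]
  · by_cases hm : 2 ≤ m
    · rw [← orbitCount_eq_count_cycleType σ hm, ← orbitCount_eq_count_cycleType τ hm,
        h m (by omega)]
    · rw [Multiset.count_eq_zero_of_notMem fun h => hm (two_le_of_mem_cycleType h),
        Multiset.count_eq_zero_of_notMem fun h => hm (two_le_of_mem_cycleType h)]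

theorem orbitCount_eq_of_isConj {σ τ : Perm α} (h : IsConj σ τ) :
    σ.orbitCount = τ.orbitCount := by
  funext m
  obtain rfl | hm := Nat.eq_zero_or_pos m
  · rw [orbitCount_zero, orbitCount_zero]
  · exact isConj_iff_forall_orbitCount_eq.1 h m hm

theorem prod_range_orbitCount_eq (σ : Perm α) {N : ℕ}
    (hN : ∀ m, N < m → σ.orbitCount m = 0) :
    ∏ m ∈ range (N + 1), (σ.orbitCount m)! * m ^ σ.orbitCount m =
      (Fintype.card α - σ.cycleType.sum)! * σ.cycleType.prod *
        ∏ n ∈ σ.cycleType.toFinset, (σ.cycleType.count n)! := by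
  set g : ℕ → ℕ := fun m => (σ.orbitCount m)! * m ^ σ.orbitCount m
  have hsupp : Function.mulSupport g ⊆ {m | σ.orbitCount m ≠ 0} := by
    intro m hm h0
    exact hm (by simp [g, h0])
  have hone : 1 ∉ σ.cycleType.toFinset := fun h =>
    absurd (two_le_of_mem_cycleType (Multiset.mem_toFinset.1 h)) (by norm_num)
  have hrange : ∏ m ∈ range (N + 1), g m = ∏ᶠ m, g m := by
    refine (finprod_eq_prod_of_mulSupport_subset g (hsupp.trans fun m hm => ?_)).symm
    by_contra h
    exact hm (hN m (by simpa using h))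
  have hcycles : ∏ m ∈ insert 1 σ.cycleType.toFinset, g m = ∏ᶠ m, g m := by
    refine (finprod_eq_prod_of_mulSupport_subset g (hsupp.trans fun m hm => ?_)).symm
    simp only [Set.mem_ofPred_eq] at hm
    simp only [coe_insert, Set.mem_insert_iff, mem_coe, Multiset.mem_toFinset]
    by_cases hm2 : 2 ≤ m
    · rw [orbitCount_eq_count_cycleType σ hm2] at hm
      exact Or.inr (Multiset.count_ne_zero.1 hm)
    · have : m ≠ 0 := by rintro rfl; exact hm (orbitCount_zero σ)
      omega
  rw [hrange, ← hcycles, prod_insert hone, Finset.prod_multiset_count σ.cycleType,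
    mul_assoc (Fintype.card α - _)!, ← prod_mul_distrib]
  congr 1
  · simp [g, orbitCount_one]
  refine prod_congr rfl fun m hm => ?_
  simp only [g]
  rw [orbitCount_eq_count_cycleType σ (two_le_of_mem_cycleType (Multiset.mem_toFinset.1 hm)),
    mul_comm]

theorem card_isConj_mul_prod_orbitCount (σ : Perm α) {N : ℕ}
    (hN : ∀ m, N < m → σ.orbitCount m = 0) :
    {τ | IsConj τ σ}.ncard * ∏ m ∈ range (N + 1), (σ.orbitCount m)! * m ^ σ.orbitCount m =
      (Fintype.card α)! := by
  have hsymm : {τ | IsConj τ σ} = {τ | IsConj σ τ} := Set.ext fun _ => isConj_comm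
  rw [hsymm, prod_range_orbitCount_eq σ hN, ← Nat.card_coe_set_eq, card_isConj_mul_eq]

theorem exists_orbitCount_eq {N : ℕ} {k : ℕ → ℕ} (hk0 : k 0 = 0)
    (hk : ∀ m, N < m → k m = 0) (hcard : Fintype.card α = ∑ m ∈ range (N + 1), m * k m) :
    ∃ σ : Perm α, σ.orbitCount = k := by
  -- The witness has as cycle type the parts `≥ 2` of the partition `K` of `card α`.
  set K : Multiset ℕ := ∑ m ∈ range (N + 1), Multiset.replicate (k m) m
  have hK : ∀ m, K.count m = k m := by
    intro m
    simp only [K, Multiset.count_sum', Multiset.count_replicate, sum_ite_eq', mem_range]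
    split_ifs with h
    · rfl
    · exact (hk m (by omega)).symm
  have hKsum : K.sum = Fintype.card α := by
    simp [K, Multiset.sum_sum, Multiset.sum_replicate, hcard, mul_comm]
  have hsmall : K.filter (¬2 ≤ ·) = Multiset.replicate (k 1) 1 := by
    ext m
    rw [Multiset.count_filter, hK, Multiset.count_replicate]
    rcases m with _ | _ | m <;> simp [hk0]
  have hCsum : (K.filter (2 ≤ ·)).sum + k 1 = Fintype.card α := by
    have hones : (Multiset.replicate (k 1) 1).sum = k 1 := by simp
    rw [← hKsum, ← hones, ← hsmall, ← Multiset.sum_add, Multiset.filter_add_not]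
  obtain ⟨σ, hσ⟩ := (exists_with_cycleType_iff α (m := K.filter (2 ≤ ·))).2
    ⟨by omega, fun a ha => (Multiset.mem_filter.1 ha).2⟩
  refine ⟨σ, funext fun m => ?_⟩
  obtain hm | hm := Nat.lt_or_ge m 2
  · interval_cases m
    · rw [orbitCount_zero, hk0]
    · rw [orbitCount_one, hσ]
      omega
  · rw [orbitCount_eq_count_cycleType σ hm, hσ,
      Multiset.count_filter_of_pos (show 2 ≤ m from hm), hK]

theorem ncard_setOf_forall_odd_ncard_orbit (σ : Perm α) {N : ℕ}
    (hN : ∀ m, N < m → σ.orbitCount m = 0) :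
    {S : Finset α | ∀ a, Odd {x | x ∈ S ∧ σ.SameCycle a x}.ncard}.ncard =
      ∏ m ∈ range (N + 1), (2 ^ (m - 1)) ^ σ.orbitCount m := by
  classical
  set f : α → Set α := fun a => {x | σ.SameCycle a x}
  have hfib : ∀ (S : Finset α) a,
      {x | x ∈ S ∧ σ.SameCycle a x}.ncard = #{x ∈ S | f x = f a} := by
    intro S a
    rw [← Set.ncard_coe_finset]
    congr 1
    ext x
    simp [f, setOf_sameCycle_eq_iff]
  have hsize : ∀ O ∈ σ.orbits, #{x | f x = O} = O.ncard := by
    intro O hO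
    obtain ⟨a, rfl⟩ := mem_orbits.1 hO
    rw [← Set.ncard_coe_finset]
    congr 1
    ext x
    simp [f, setOf_sameCycle_eq_iff]
  have hmaps : ∀ O ∈ σ.orbits, O.ncard ∈ range (N + 1) := by
    intro O hO
    have hcount : O ∈ {O' ∈ σ.orbits | O'.ncard = O.ncard} := mem_filter.2 ⟨hO, rfl⟩
    by_contra h
    exact card_ne_zero_of_mem hcount (hN O.ncard (by simpa using h))
  simp_rw [hfib]
  rw [Set.ncard_eq_toFinset_card', Set.toFinset_ofPred, card_filter_forall_odd_card_fiber f]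
  change ∏ O ∈ σ.orbits, _ = _
  rw [prod_congr rfl fun O hO => by rw [hsize O hO], ← prod_fiberwise_of_maps_to hmaps]
  refine prod_congr rfl fun m _ => ?_
  rw [prod_congr rfl fun O hO => by rw [(mem_filter.1 hO).2], prod_const]
  rfl

end Equiv.Perm

/-- the number of semicharts `(n,v,S)` (a bijection `v` of `{1,...,n}`,
modelled on `ZMod n`, with `S` meeting every `v`-orbit in an odd number of elements)
such that `v` has exactly `k_m` orbits of cardinality `m` for every `m ≥ 1`, where
`n = Σ_m m·k_m > 0`, equals `n! ∏_m (1/k_m!)·(2^{m-1}/m)^{k_m}` (stated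
multiplicatively). -/
theorem stmt12 (N : ℕ) (k : ℕ → ℕ) (hk0 : k 0 = 0) (hk : ∀ m, N < m → k m = 0)
    (hne : ∃ m, k m ≠ 0) (n : ℕ) (hn : n = ∑ m ∈ Finset.range (N + 1), m * k m) :
    Set.ncard {p : Equiv.Perm (ZMod n) × Finset (ZMod n) |
        (∀ a : ZMod n,
          Odd (Set.ncard {x : ZMod n | x ∈ p.2 ∧ ∃ s : ℕ, (p.1 ^ s) a = x})) ∧
        ∀ m : ℕ, 1 ≤ m →
          Set.ncard {O : Set (ZMod n) |
            (∃ a : ZMod n, O = {x | ∃ s : ℕ, (p.1 ^ s) a = x}) ∧ O.ncard = m} = k m} *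
      ∏ m ∈ Finset.range (N + 1), Nat.factorial (k m) * m ^ (k m) =
    Nat.factorial n * ∏ m ∈ Finset.range (N + 1), (2 ^ (m - 1)) ^ (k m) := by
  classical
  have : NeZero n := by
    obtain ⟨m, hm⟩ := hne
    have hmN : m < N + 1 := by by_contra h; exact hm (hk m (by omega))
    have hmk : 0 < m * k m := Nat.mul_pos (Nat.pos_of_ne_zero fun h => hm (h ▸ hk0))
      (Nat.pos_of_ne_zero hm)
    have := single_le_sum (f := fun m => m * k m) (fun _ _ => Nat.zero_le _) (mem_range.2 hmN)
    exact ⟨by omega⟩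
  obtain ⟨σ₀, rfl⟩ :=
    Equiv.Perm.exists_orbitCount_eq (α := ZMod n) hk0 hk (by rw [ZMod.card, hn])
  simp only [Equiv.Perm.exists_pow_apply_eq_iff_sameCycle, ← Equiv.Perm.orbitCount_eq_ncard,
    ← Equiv.Perm.isConj_iff_forall_orbitCount_eq]
  have hsubsets : ∀ σ, IsConj σ σ₀ →
      {S : Finset (ZMod n) | ∀ a, Odd {x | x ∈ S ∧ σ.SameCycle a x}.ncard}.ncard =
        ∏ m ∈ range (N + 1), (2 ^ (m - 1)) ^ σ₀.orbitCount m := fun σ hσ => by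
    rw [← Equiv.Perm.orbitCount_eq_of_isConj hσ] at hk ⊢
    exact Equiv.Perm.ncard_setOf_forall_odd_ncard_orbit σ hk
  rw [ncard_setOf_prod_eq_mul _ _ hsubsets, mul_right_comm,
    Equiv.Perm.card_isConj_mul_prod_orbitCount σ₀ hk, ZMod.card]
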